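/- Let G be a finite nonabelian p-group with commutator subgroup of order p, p > 2, and let C_{g_1},…,C_{g_t} be the conjugacy classes of G of size at least 2. Then ζ(V(𝔽_p G)) = V(𝔽_p ζ(G)) × N, where N = ∏_{i=1}^t ⟨1 + Ĉ_{g_i}⟩ is an elementary abelian p-subgroup of V(𝔽_p G). -/

import Mathlib

open MonoidAlgebra

/-- The augmentation map `𝔽_p G → 𝔽_p`. -/
noncomputable def aug (p : ℕ) [Fact p.Prime] (G : Type*) [Group G] :
    MonoidAlgebra (ZMod p) G →ₐ[ZMod p] ZMod p :=
  MonoidAlgebra.lift (ZMod p) (ZMod p) G 1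

/-- The group `V(𝔽_p G)` of normalized units (units of augmentation `1`). -/
noncomputable def V (p : ℕ) [Fact p.Prime] (G : Type*) [Group G] :
    Subgroup (MonoidAlgebra (ZMod p) G)ˣ :=
  (Units.map (aug p G : MonoidAlgebra (ZMod p) G →* ZMod p)).ker

/-- The class sum of the conjugacy class of `g`. -/
noncomputable def classSum (p : ℕ) [Fact p.Prime] (G : Type*) [Group G] [Fintype G]
    [DecidableEq G] (g : G) : MonoidAlgebra (ZMod p) G :=
  ∑ h ∈ Finset.univ.filter (fun h => IsConj g h), MonoidAlgebra.of (ZMod p) G h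

/-- `V(𝔽_p ζ(G))` viewed inside the unit group: the normalized units supported on the
center of `G`. -/
noncomputable def Vcenter (p : ℕ) [Fact p.Prime] (G : Type*) [Group G] [Fintype G] :
    Subgroup (MonoidAlgebra (ZMod p) G)ˣ :=
  Subgroup.closure {u | u ∈ V p G ∧
    ∀ g ∈ ((u : (MonoidAlgebra (ZMod p) G)ˣ) : MonoidAlgebra (ZMod p) G).coeff.support,
      g ∈ Subgroup.center G}

/-- The subgroup `N = ∏ ⟨1 + Ĉ_{g_i}⟩` generated by `1 + Ĉ_g` for the conjugacy
classes with at least two elements (i.e. `g` noncentral). -/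
noncomputable def Nsub (p : ℕ) [Fact p.Prime] (G : Type*) [Group G] [Fintype G]
    [DecidableEq G] : Subgroup (MonoidAlgebra (ZMod p) G)ˣ :=
  Subgroup.closure {u | ∃ g : G, g ∉ Subgroup.center G ∧
    ((u : (MonoidAlgebra (ZMod p) G)ˣ) : MonoidAlgebra (ZMod p) G) = 1 + classSum p G g}

/-! Since `G'` is a normal subgroup of order `p` of the `p`-group `G`, it is central, so for
noncentral `g` the map `x ↦ [x, g]` is a homomorphism onto `G'`: the class of `g` is the coset
`g G'` and `Ĉ_g = g σ` with `σ = Ĝ'`. Now `σ` is central with `σ² = |G'| σ = 0`, so the span `W` of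
the noncentral class sums satisfies `W W = 0` and `t ↦ 1 + t` maps `(W, +)` homomorphically onto
`N`. Hence `N` is elementary abelian, and it meets `V(𝔽_p ζ(G))` trivially because elements of `W`
vanish on `ζ(G)`. A central unit `u` has class-function coefficients, so `u = z + y` with `z`
supported on `ζ(G)` and `y ∈ W`; writing `u⁻¹ = z' + y'` likewise, `u⁻¹ y = z' y ∈ W`, so
`n = 1 - u⁻¹ y ∈ N` and `u n = z ∈ V(𝔽_p ζ(G))`. -/

section PGroup

open Subgroup

theorem Subgroup.eq_of_le_of_ne_bot_of_card_prime {G : Type*} [Group G] {H K : Subgroup G}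
    (hK : (Nat.card K).Prime) (hHK : H ≤ K) (hH : H ≠ ⊥) : H = K := by
  have := Fact.mk hK
  rcases (H.subgroupOf K).eq_bot_or_eq_top_of_prime_card with h | h
  · exact absurd ((subgroupOf_eq_bot.mp h).eq_bot_of_le hHK) hH
  · exact hHK.antisymm (subgroupOf_eq_top.mp h)

theorem IsPGroup.le_center_of_card_eq_prime {p : ℕ} [Fact p.Prime] {G : Type*} [Group G]
    [Finite G] (hG : IsPGroup p G) {N : Subgroup G} [N.Normal] (hN : Nat.card N = p) :
    N ≤ center G := by
  have hfix1 : (1 : N) ∈ MulAction.fixedPoints (ConjAct G) N :=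
    MulAction.mem_fixedPoints.mpr fun g => by ext; simp
  obtain ⟨b, hb, hb1⟩ := (hG.of_equiv ConjAct.toConjAct)
    |>.exists_fixed_point_of_prime_dvd_card_of_fixed_point N (hN ▸ dvd_rfl) hfix1
  have hbZ : (b : G) ∈ center G := mem_center_iff.mpr fun g => by
    have := congrArg Subtype.val (hb (ConjAct.toConjAct g))
    rw [ConjAct.Subgroup.val_conj_smul, ConjAct.toConjAct_smul] at this
    calc g * b = g * b * g⁻¹ * g := by group
      _ = b * g := by rw [this]
  have hne : N ⊓ center G ≠ ⊥ := (ne_bot_iff_exists_ne_one).mpr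
    ⟨⟨b, mem_inf.mpr ⟨b.2, hbZ⟩⟩, fun h => hb1 (Subtype.ext (congrArg Subtype.val h).symm)⟩
  exact eq_of_le_of_ne_bot_of_card_prime (hN ▸ Fact.out) inf_le_left hne ▸ inf_le_right

open scoped commutatorElement in
theorem isConj_iff_inv_mul_mem_commutator {G : Type*} [Group G]
    (hK : commutator G ≤ center G) (hp : (Nat.card (commutator G)).Prime) {g : G}
    (hg : g ∉ center G) (h : G) : IsConj g h ↔ g⁻¹ * h ∈ commutator G := by
  have hcentral : ∀ x y, y * ⁅x, g⁆ = ⁅x, g⁆ * y := fun x =>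
    mem_center_iff.mp (hK (commutator_def G ▸ commutator_mem_commutator (mem_top x) (mem_top g)))
  let φ : G →* G :=
    { toFun x := ⁅x, g⁆
      map_one' := by simp
      map_mul' x y := calc
        ⁅x * y, g⁆ = x * ⁅y, g⁆ * (g * x⁻¹ * g⁻¹) := by simp only [commutatorElement_def]; group
        _ = ⁅y, g⁆ * ⁅x, g⁆ := by
          rw [hcentral y x]; simp only [commutatorElement_def]; group
        _ = ⁅x, g⁆ * ⁅y, g⁆ := (hcentral y _).symm }
  have hrange : φ.range = commutator G := by
    refine eq_of_le_of_ne_bot_of_card_prime hp ?_ fun hbot => hg (mem_center_iff.mpr fun x => ?_)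
    · rintro _ ⟨x, rfl⟩
      exact commutator_def G ▸ commutator_mem_commutator (mem_top x) (mem_top g)
    · exact commutatorElement_eq_one_iff_mul_comm.mp (mem_bot.mp (hbot ▸ φ.mem_range.mpr ⟨x, rfl⟩))
  rw [isConj_iff, ← hrange]
  refine exists_congr fun x => ?_
  show _ ↔ ⁅x, g⁆ = _
  rw [eq_inv_mul_iff_mul_eq, hcentral, commutatorElement_def]
  constructor <;> intro h <;> rw [← h] <;> group

end PGroup

namespace MonoidAlgebra

section Monoid

variable {k M : Type*} [CommSemiring k] [Monoid M]

instance instFinite [Finite k] [Finite M] : Finite k[M] :=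
  Finite.of_injective (fun x : k[M] => ⇑x.coeff) (DFunLike.coe_injective.comp coeff_injective)

theorem coeff_sum_of [DecidableEq M] (s : Finset M) (x : M) :
    (∑ m ∈ s, of k M m).coeff x = if x ∈ s then 1 else 0 := by
  simp [coeff_sum, Finsupp.finsetSum_apply, Finsupp.single_apply]

theorem mem_center_iff_forall_of {x : k[M]} :
    x ∈ Subalgebra.center k k[M] ↔ ∀ m, of k M m * x = x * of k M m := by
  refine ⟨fun hx m => Subalgebra.mem_center_iff.mp hx _, fun hx => ?_⟩
  rw [Subalgebra.mem_center_iff]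
  intro a
  induction a using induction_on with
  | of m => exact hx m
  | add a b ha hb => rw [add_mul, mul_add, ha, hb]
  | smul r a ha => rw [smul_mul_assoc, mul_smul_comm, ha]

variable (k) in
noncomputable def supportedSubalgebra (S : Submonoid M) : Subalgebra k k[M] :=
  (supported k k (S : Set M)).toSubalgebra
    (fun m hm => Finset.mem_one.mp (support_coeff_one_subset hm) ▸ S.one_mem)
    fun x y hx hy m hm => by
      classical
      obtain ⟨a, ha, b, hb, rfl⟩ := Finset.mem_mul.mp (support_coeff_mul_subset x y hm)
      exact S.mul_mem (hx ha) (hy hb)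

theorem mem_supportedSubalgebra {S : Submonoid M} {x : k[M]} :
    x ∈ supportedSubalgebra k S ↔ ∀ m ∉ S, x.coeff m = 0 :=
  mem_supported'

end Monoid

section Group

variable {k G : Type*} [CommSemiring k] [Group G]

theorem mem_center_iff_coeff_conj {x : k[G]} :
    x ∈ Subalgebra.center k k[G] ↔ ∀ g h, x.coeff (g * h * g⁻¹) = x.coeff h := by
  rw [mem_center_iff_forall_of]
  refine ⟨fun hx g h => ?_, fun hx g => ?_⟩
  · simpa [of_apply] using congrArg (fun y : k[G] => y.coeff (g * h)) (hx g).symm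
  · ext h
    have := hx g⁻¹ (h * g⁻¹)
    rw [show g⁻¹ * (h * g⁻¹) * g⁻¹⁻¹ = g⁻¹ * h by group] at this
    simpa [of_apply] using this

theorem supportedSubalgebra_center_le_center :
    supportedSubalgebra k (Subgroup.center G).toSubmonoid ≤ Subalgebra.center k k[G] := by
  intro x hx
  rw [mem_center_iff_coeff_conj]
  intro g h
  by_cases hh : h ∈ Subgroup.center G
  · rw [Subgroup.mem_center_iff.mp hh g, mul_inv_cancel_right]
  · rw [mem_supportedSubalgebra.mp hx h hh, mem_supportedSubalgebra.mp hx _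
      fun hc => hh (by simpa [mul_assoc] using Subgroup.instNormalCenter.conj_mem _ hc g⁻¹)]

end Group

section SubgroupSum

variable {k G : Type*} [CommSemiring k] [Group G] [Fintype G] [DecidableEq G]

variable (k) in
noncomputable def subgroupSum (H : Subgroup G) [DecidablePred (· ∈ H)] : k[G] :=
  ∑ h ∈ Finset.univ.filter (· ∈ H), of k G h

variable (H : Subgroup G) [DecidablePred (· ∈ H)]

theorem coeff_subgroupSum (x : G) :
    (subgroupSum k H).coeff x = if x ∈ H then 1 else 0 := by
  rw [subgroupSum, coeff_sum_of]
  simp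

theorem of_mul_subgroupSum {g : G} (hg : g ∈ H) : of k G g * subgroupSum k H = subgroupSum k H := by
  ext x
  simp [of_apply, coeff_subgroupSum, H.mul_mem_cancel_left (H.inv_mem hg)]

theorem subgroupSum_mul_self :
    subgroupSum k H * subgroupSum k H = (Nat.card H : k) • subgroupSum k H := by
  calc subgroupSum k H * subgroupSum k H
      = ∑ h ∈ Finset.univ.filter (· ∈ H), of k G h * subgroupSum k H := Finset.sum_mul _ _ _
    _ = (Nat.card H : k) • subgroupSum k H := by
      rw [Finset.sum_congr rfl fun h hh => of_mul_subgroupSum H (Finset.mem_filter.mp hh).2,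
        Finset.sum_const, Nat.cast_smul_eq_nsmul, Nat.card_eq_fintype_card, Fintype.card_subtype]

end SubgroupSum

end MonoidAlgebra

theorem Submonoid.val_inv_mem_of_finite {M : Type*} [Monoid M] (S : Submonoid M) [Finite S]
    {u : Mˣ} (hu : (u : M) ∈ S) : ((u⁻¹ : Mˣ) : M) ∈ S := by
  have hinj : Function.Injective fun s : S => (⟨u * s, S.mul_mem hu s.2⟩ : S) :=
    fun s t hst => Subtype.ext ((Units.mul_right_inj u).mp (congrArg Subtype.val hst))
  obtain ⟨s, hs⟩ := Finite.injective_iff_surjective.mp hinj ⟨1, S.one_mem⟩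
  rw [Units.inv_eq_of_mul_eq_one_right (congrArg Subtype.val hs)]
  exact s.2

section Augmentation

variable {p : ℕ} [Fact p.Prime] {G : Type*} [Group G]

theorem aug_of (g : G) : aug p G (of (ZMod p) G g) = 1 := by
  simp [aug]

theorem aug_subgroupSum [Fintype G] (H : Subgroup G) [DecidablePred (· ∈ H)] :
    aug p G (subgroupSum (ZMod p) H) = Nat.card H := by
  rw [subgroupSum, map_sum, Finset.sum_congr rfl fun h _ => aug_of h]
  simp [Nat.card_eq_fintype_card, Fintype.card_subtype]

theorem mem_V_iff {u : (ZMod p)[G]ˣ} : u ∈ V p G ↔ aug p G u = 1 := by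
  simp [V, MonoidHom.mem_ker, Units.ext_iff]

theorem mem_map_center_V_iff {u : (ZMod p)[G]ˣ} :
    u ∈ (Subgroup.center (V p G)).map (V p G).subtype ↔
      u ∈ V p G ∧ (u : (ZMod p)[G]) ∈ Subalgebra.center (ZMod p) (ZMod p)[G] := by
  constructor
  · rintro ⟨w, hw, rfl⟩
    refine ⟨w.2, mem_center_iff_forall_of.mpr fun g => ?_⟩
    let gV : V p G := ⟨(of (ZMod p) G).toHomUnits g, mem_V_iff.mpr (aug_of g)⟩
    exact congrArg (fun v : V p G => ((v : (ZMod p)[G]ˣ) : (ZMod p)[G]))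
      (Subgroup.mem_center_iff.mp hw gV)
  · rintro ⟨huV, huZ⟩
    refine ⟨⟨u, huV⟩, Subgroup.mem_center_iff.mpr fun v => ?_, rfl⟩
    exact Subtype.ext (Units.ext (Subalgebra.mem_center_iff.mp huZ _))

end Augmentation

section ClassSum

variable {p : ℕ} [Fact p.Prime] {G : Type*} [Group G] [Fintype G] [DecidableEq G]

theorem coeff_classSum (g x : G) : (classSum p G g).coeff x = if IsConj g x then 1 else 0 := by
  rw [classSum, coeff_sum_of]
  simp

theorem classSum_mem_center (g : G) : classSum p G g ∈ Subalgebra.center (ZMod p) (ZMod p)[G] := by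
  refine mem_center_iff_coeff_conj.mpr fun h x => ?_
  have hx : IsConj x (h * x * h⁻¹) := isConj_iff.mpr ⟨h, rfl⟩
  have e : IsConj g (h * x * h⁻¹) ↔ IsConj g x :=
    ⟨fun hc => hc.trans hx.symm, fun hc => hc.trans hx⟩
  simp only [coeff_classSum, e]

theorem of_mul_classSum {z : G} (hz : z ∈ Subgroup.center G) (g : G) :
    of (ZMod p) G z * classSum p G g = classSum p G (z * g) := by
  ext x
  simp only [of_apply, coeff_single_mul_apply, coeff_classSum, one_mul, isConj_iff]
  congr 1
  refine propext (exists_congr fun c => ?_)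
  rw [eq_inv_mul_iff_mul_eq, ← mul_assoc c z g, Subgroup.mem_center_iff.mp hz c]
  simp only [mul_assoc]

theorem classSum_mem_supportedSubalgebra {g : G} (hg : g ∈ Subgroup.center G) :
    classSum p G g ∈ supportedSubalgebra (ZMod p) (Subgroup.center G).toSubmonoid :=
  mem_supportedSubalgebra.mpr fun x hx => by
    rw [coeff_classSum, if_neg fun hc : IsConj g x => hx (hc.eq_of_left_mem_center hg ▸ hg)]

theorem coeff_classSum_eq_zero_of_mem_center {g x : G} (hg : g ∉ Subgroup.center G)
    (hx : x ∈ Subgroup.center G) : (classSum p G g).coeff x = 0 := by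
  rw [coeff_classSum, if_neg fun hc : IsConj g x => hg (hc.eq_of_right_mem_center hx ▸ hx)]

theorem center_le_span_classSum :
    Subalgebra.toSubmodule (Subalgebra.center (ZMod p) (ZMod p)[G]) ≤
      Submodule.span (ZMod p) (Set.range (classSum p G)) := by
  classical
  intro x hx
  have hconst : ∀ a b, IsConj a b → x.coeff a = x.coeff b := fun a b hab => by
    obtain ⟨c, rfl⟩ := isConj_iff.mp hab
    exact (mem_center_iff_coeff_conj.mp hx c a).symm
  choose rep hrep using ConjClasses.exists_rep (α := G)
  have hsum : x = ∑ c, x.coeff (rep c) • classSum p G (rep c) := by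
    ext y
    rw [coeff_sum, Finsupp.finsetSum_apply, Finset.sum_eq_single (ConjClasses.mk y)]
    · have hc : IsConj (rep (ConjClasses.mk y)) y := ConjClasses.mk_eq_mk_iff_isConj.mp (hrep _)
      rw [coeff_smul, Finsupp.smul_apply, coeff_classSum, if_pos hc, smul_eq_mul, mul_one,
        hconst _ _ hc]
    · intro c _ hc
      have : ¬ IsConj (rep c) y := fun h =>
        hc ((hrep c).symm.trans (ConjClasses.mk_eq_mk_iff_isConj.mpr h))
      rw [coeff_smul, Finsupp.smul_apply, coeff_classSum, if_neg this, smul_zero]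
    · simp
  rw [hsum]
  exact Submodule.sum_mem _ fun c _ => Submodule.smul_mem _ _ (Submodule.subset_span ⟨_, rfl⟩)

end ClassSum

section NoncentralClassSpan

variable (p : ℕ) [Fact p.Prime] (G : Type*) [Group G] [Fintype G] [DecidableEq G]

noncomputable def noncentralClassSpan : Submodule (ZMod p) (ZMod p)[G] :=
  Submodule.span (ZMod p) (classSum p G '' (Subgroup.center G : Set G)ᶜ)

variable {p G}

theorem noncentralClassSpan_le_center :
    noncentralClassSpan p G ≤ Subalgebra.toSubmodule (Subalgebra.center (ZMod p) (ZMod p)[G]) :=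
  Submodule.span_le.mpr <| Set.image_subset_iff.mpr fun g _ => classSum_mem_center g

theorem noncentralClassSpan_le_supported_compl :
    noncentralClassSpan p G ≤ supported (ZMod p) (ZMod p) (Subgroup.center G : Set G)ᶜ :=
  Submodule.span_le.mpr <| Set.image_subset_iff.mpr fun _ hg =>
    mem_supported'.mpr fun _ hx => coeff_classSum_eq_zero_of_mem_center hg (not_not.mp hx)

theorem mul_mem_noncentralClassSpan {z t : (ZMod p)[G]}
    (hz : z ∈ supportedSubalgebra (ZMod p) (Subgroup.center G).toSubmonoid)
    (ht : t ∈ noncentralClassSpan p G) : z * t ∈ noncentralClassSpan p G := by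
  have hz' : z ∈ Submodule.span (ZMod p) ((fun m => single m 1) '' (Subgroup.center G : Set G)) :=
    supported_eq_span_single (ZMod p) (Subgroup.center G : Set G) ▸ hz
  suffices h : Submodule.span (ZMod p) ((fun m => single m 1) '' (Subgroup.center G : Set G)) *
      noncentralClassSpan p G ≤ noncentralClassSpan p G from h (Submodule.mul_mem_mul hz' ht)
  rw [noncentralClassSpan, Submodule.span_mul_span, Submodule.span_le]
  rintro _ ⟨_, ⟨c, hc, rfl⟩, _, ⟨g, hg, rfl⟩, rfl⟩
  exact Submodule.subset_span ⟨c * g, ((Subgroup.center G).mul_mem_cancel_left hc).not.mpr hg,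
    (of_mul_classSum hc g).symm⟩

theorem center_le_supportedSubalgebra_sup_noncentralClassSpan :
    Subalgebra.toSubmodule (Subalgebra.center (ZMod p) (ZMod p)[G]) ≤
      Subalgebra.toSubmodule (supportedSubalgebra (ZMod p) (Subgroup.center G).toSubmonoid) ⊔
        noncentralClassSpan p G := by
  refine center_le_span_classSum.trans (Submodule.span_le.mpr ?_)
  rintro _ ⟨g, rfl⟩
  by_cases hg : g ∈ Subgroup.center G
  · exact Submodule.mem_sup_left (classSum_mem_supportedSubalgebra hg)
  · exact Submodule.mem_sup_right (Submodule.subset_span ⟨g, hg, rfl⟩)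

variable (hK : commutator G ≤ Subgroup.center G) (hG' : Nat.card (commutator G) = p)
include hK hG'

theorem classSum_eq_of_mul_subgroupSum [DecidablePred (· ∈ commutator G)] {g : G}
    (hg : g ∉ Subgroup.center G) :
    classSum p G g = of (ZMod p) G g * subgroupSum (ZMod p) (commutator G) := by
  ext x
  rw [coeff_classSum, of_apply, coeff_single_mul_apply, coeff_subgroupSum, one_mul]
  simp only [isConj_iff_inv_mul_mem_commutator hK (hG' ▸ Fact.out) hg]

theorem mul_eq_zero_of_mem_noncentralClassSpan :
    ∀ s ∈ noncentralClassSpan p G, ∀ t ∈ noncentralClassSpan p G, s * t = 0 := by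
  classical
  set σ := subgroupSum (ZMod p) (commutator G)
  have hW : noncentralClassSpan p G ≤ LinearMap.range (LinearMap.mulRight (ZMod p) σ) :=
    Submodule.span_le.mpr <| Set.image_subset_iff.mpr fun g hg =>
      ⟨of (ZMod p) G g, (classSum_eq_of_mul_subgroupSum hK hG' hg).symm⟩
  have hσ : σ ∈ Subalgebra.center (ZMod p) (ZMod p)[G] :=
    supportedSubalgebra_center_le_center <| mem_supportedSubalgebra.mpr fun x hx => by
      rw [coeff_subgroupSum, if_neg fun h => hx (hK h)]
  rintro _ hs _ ht
  obtain ⟨a, rfl⟩ := hW hs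
  obtain ⟨b, rfl⟩ := hW ht
  calc a * σ * (b * σ) = a * b * (σ * σ) := by
        simp only [mul_assoc, ← mul_assoc σ b, ← Subalgebra.mem_center_iff.mp hσ b]
    _ = 0 := by rw [subgroupSum_mul_self, hG', ZMod.natCast_self, zero_smul, mul_zero]

theorem aug_eq_zero_of_mem_noncentralClassSpan {t : (ZMod p)[G]}
    (ht : t ∈ noncentralClassSpan p G) : aug p G t = 0 := by
  classical
  refine (Submodule.span_le (p := LinearMap.ker (aug p G).toLinearMap)).mpr ?_ ht
  rintro _ ⟨g, hg, rfl⟩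
  rw [SetLike.mem_coe, LinearMap.mem_ker, AlgHom.toLinearMap_apply,
    classSum_eq_of_mul_subgroupSum hK hG' hg, map_mul, aug_of, aug_subgroupSum, hG',
    ZMod.natCast_self, mul_zero]

end NoncentralClassSpan

section OneAddUnits

variable {A : Type*} [Ring A] (W : AddSubgroup A) (hW : ∀ s ∈ W, ∀ t ∈ W, s * t = 0)

noncomputable def oneAddUnitsHom : Multiplicative W →* Aˣ :=
  MonoidHom.toHomUnits
    { toFun t := 1 + (t.toAdd : A)
      map_one' := by simp
      map_mul' s t := by
        simp only [toAdd_mul, AddSubgroup.coe_add, mul_add, add_mul, one_mul, mul_one,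
          hW _ s.toAdd.2 _ t.toAdd.2]
        abel }

theorem val_oneAddUnitsHom (t : Multiplicative W) :
    (oneAddUnitsHom W hW t : A) = 1 + (t.toAdd : A) :=
  rfl

theorem oneAddUnitsHom_pow_char (p : ℕ) [CharP A p] (t : Multiplicative W) :
    oneAddUnitsHom W hW t ^ p = 1 := by
  ext
  rw [← map_pow, val_oneAddUnitsHom, toAdd_pow, AddSubgroup.coe_nsmul, nsmul_eq_mul,
    CharP.cast_eq_zero, zero_mul, add_zero, Units.val_one]

end OneAddUnits

section UnitGroups

variable {p : ℕ} [Fact p.Prime] {G : Type*} [Group G] [Fintype G]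

theorem mem_Vcenter_iff {u : (ZMod p)[G]ˣ} :
    u ∈ Vcenter p G ↔ u ∈ V p G ∧
      (u : (ZMod p)[G]) ∈ supportedSubalgebra (ZMod p) (Subgroup.center G).toSubmonoid := by
  let S := (supportedSubalgebra (ZMod p) (Subgroup.center G).toSubmonoid).toSubmonoid
  let H : Subgroup (ZMod p)[G]ˣ :=
    { carrier := {u | u ∈ V p G ∧ (u : (ZMod p)[G]) ∈ S}
      mul_mem' := fun ha hb => ⟨mul_mem ha.1 hb.1, S.mul_mem ha.2 hb.2⟩
      one_mem' := ⟨one_mem _, S.one_mem⟩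
      inv_mem' := fun ha => ⟨inv_mem ha.1, S.val_inv_mem_of_finite ha.2⟩ }
  have : Vcenter p G = H :=
    le_antisymm ((Subgroup.closure_le H).mpr fun _ hu => hu) fun _ hu => Subgroup.subset_closure hu
  rw [this]
  rfl

theorem Vcenter_le_map_center_V : Vcenter p G ≤ (Subgroup.center (V p G)).map (V p G).subtype :=
  fun _ hu =>
    let ⟨huV, huS⟩ := mem_Vcenter_iff.mp hu
    mem_map_center_V_iff.mpr ⟨huV, supportedSubalgebra_center_le_center huS⟩

end UnitGroups

section Decomposition

variable {p : ℕ} [Fact p.Prime] {G : Type*} [Group G] [Fintype G] [DecidableEq G]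

variable (hK : commutator G ≤ Subgroup.center G) (hG' : Nat.card (commutator G) = p)
include hK hG'

theorem Nsub_eq_range :
    Nsub p G = (oneAddUnitsHom (noncentralClassSpan p G).toAddSubgroup
      (mul_eq_zero_of_mem_noncentralClassSpan hK hG')).range := by
  set φ := oneAddUnitsHom (noncentralClassSpan p G).toAddSubgroup
    (mul_eq_zero_of_mem_noncentralClassSpan hK hG')
  refine le_antisymm ((Subgroup.closure_le _).mpr ?_) ?_
  · rintro u ⟨g, hg, hu⟩
    exact ⟨.ofAdd ⟨classSum p G g, Submodule.subset_span ⟨g, hg, rfl⟩⟩, Units.ext hu.symm⟩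
  rintro _ ⟨t, rfl⟩
  suffices h : ∀ x (hx : x ∈ noncentralClassSpan p G), φ (.ofAdd ⟨x, hx⟩) ∈ Nsub p G from
    h _ t.toAdd.2
  intro x hx
  induction hx using Submodule.span_induction with
  | mem x hx =>
    obtain ⟨g, hg, rfl⟩ := hx
    exact Subgroup.subset_closure ⟨g, hg, rfl⟩
  | zero =>
    rw [show (Multiplicative.ofAdd ⟨0, zero_mem _⟩ :
      Multiplicative (noncentralClassSpan p G).toAddSubgroup) = 1 from rfl, map_one]
    exact one_mem _
  | add x y hx' hy' hx hy =>
    rw [show (Multiplicative.ofAdd ⟨x + y, add_mem hx' hy'⟩ :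
      Multiplicative (noncentralClassSpan p G).toAddSubgroup) =
        .ofAdd ⟨x, hx'⟩ * .ofAdd ⟨y, hy'⟩ from rfl, map_mul]
    exact mul_mem hx hy
  | smul a x hx' hx =>
    rw [show (Multiplicative.ofAdd ⟨a • x, Submodule.smul_mem _ a hx'⟩ :
      Multiplicative (noncentralClassSpan p G).toAddSubgroup) = .ofAdd ⟨x, hx'⟩ ^ a.val from
        congrArg Multiplicative.ofAdd (Subtype.ext (by
          simp [← Nat.cast_smul_eq_nsmul (ZMod p)])), map_pow]
    exact pow_mem hx _

theorem Nsub_le_map_center_V : Nsub p G ≤ (Subgroup.center (V p G)).map (V p G).subtype := by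
  rw [Nsub_eq_range hK hG']
  rintro _ ⟨t, rfl⟩
  refine mem_map_center_V_iff.mpr ⟨mem_V_iff.mpr ?_, ?_⟩ <;> rw [val_oneAddUnitsHom]
  · rw [map_add, map_one, aug_eq_zero_of_mem_noncentralClassSpan hK hG' t.toAdd.2, add_zero]
  · exact add_mem (one_mem _) (noncentralClassSpan_le_center t.toAdd.2)

theorem map_center_V_le_sup :
    (Subgroup.center (V p G)).map (V p G).subtype ≤ Vcenter p G ⊔ Nsub p G := by
  intro u hu
  obtain ⟨huV, huZ⟩ := mem_map_center_V_iff.mp hu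
  have huZ' : ((u⁻¹ : (ZMod p)[G]ˣ) : (ZMod p)[G]) ∈ Subalgebra.center (ZMod p) (ZMod p)[G] :=
    Subalgebra.mem_center_iff.mpr fun b =>
      (Commute.units_inv_right (Subalgebra.mem_center_iff.mp huZ b)).eq
  obtain ⟨z, hz, y, hy, hzy⟩ :=
    Submodule.mem_sup.mp (center_le_supportedSubalgebra_sup_noncentralClassSpan huZ)
  obtain ⟨z', hz', y', hy', hzy'⟩ :=
    Submodule.mem_sup.mp (center_le_supportedSubalgebra_sup_noncentralClassSpan huZ')
  have hw : -(((u⁻¹ : (ZMod p)[G]ˣ) : (ZMod p)[G]) * y) ∈ noncentralClassSpan p G := by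
    rw [← hzy', add_mul, mul_eq_zero_of_mem_noncentralClassSpan hK hG' _ hy' _ hy, add_zero]
    exact neg_mem (mul_mem_noncentralClassSpan hz' hy)
  obtain ⟨n, hn, hnval⟩ : ∃ n ∈ Nsub p G,
      (n : (ZMod p)[G]) = 1 + -(((u⁻¹ : (ZMod p)[G]ˣ) : (ZMod p)[G]) * y) :=
    ⟨_, (Nsub_eq_range hK hG').ge ⟨.ofAdd ⟨_, hw⟩, rfl⟩, rfl⟩
  have hun : ((u * n : (ZMod p)[G]ˣ) : (ZMod p)[G]) = z := by
    rw [Units.val_mul, hnval, mul_add, mul_one, mul_neg, ← mul_assoc, Units.mul_inv, one_mul, ← hzy,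
      add_neg_cancel_right]
  have hunV : u * n ∈ Vcenter p G := mem_Vcenter_iff.mpr
    ⟨mul_mem huV (mem_map_center_V_iff.mp (Nsub_le_map_center_V hK hG' hn)).1, hun ▸ hz⟩
  simpa using mul_mem (Subgroup.mem_sup_left hunV) (Subgroup.mem_sup_right (inv_mem hn))

theorem Vcenter_inf_Nsub_eq_bot : Vcenter p G ⊓ Nsub p G = ⊥ := by
  rw [Nsub_eq_range hK hG', eq_bot_iff]
  rintro _ ⟨hu, t, rfl⟩
  have hS := sub_mem (mem_Vcenter_iff.mp hu).2 (one_mem _)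
  rw [val_oneAddUnitsHom, add_sub_cancel_left] at hS
  have ht : (t.toAdd : (ZMod p)[G]) = 0 := by
    ext x
    by_cases hx : x ∈ Subgroup.center G
    · exact mem_supported'.mp (noncentralClassSpan_le_supported_compl t.toAdd.2) x (not_not.mpr hx)
    · exact mem_supportedSubalgebra.mp hS x hx
  exact Subgroup.mem_bot.mpr (Units.ext (by rw [val_oneAddUnitsHom, ht, add_zero, Units.val_one]))

end Decomposition

theorem center_V_decomposition_general (p : ℕ) [Fact p.Prime] (G : Type*)
    [Group G] [Fintype G] [DecidableEq G] (hG : IsPGroup p G)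
    (hG' : Nat.card (commutator G) = p) :
    (Subgroup.center ↥(V p G)).map (V p G).subtype = Vcenter p G ⊔ Nsub p G ∧
    Vcenter p G ⊓ Nsub p G = ⊥ ∧
    (∀ n ∈ Nsub p G, n ^ p = 1) ∧
    (∀ m ∈ Nsub p G, ∀ n ∈ Nsub p G, m * n = n * m) := by
  have hK : commutator G ≤ Subgroup.center G := hG.le_center_of_card_eq_prime hG'
  refine ⟨le_antisymm (map_center_V_le_sup hK hG')
      (sup_le Vcenter_le_map_center_V (Nsub_le_map_center_V hK hG')),
    Vcenter_inf_Nsub_eq_bot hK hG', ?_, ?_⟩ <;> rw [Nsub_eq_range hK hG']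
  · have : CharP (ZMod p)[G] p := charP_of_injective_algebraMap' (ZMod p) p
    rintro _ ⟨t, rfl⟩
    exact oneAddUnitsHom_pow_char _ _ p t
  · rintro _ ⟨s, rfl⟩ _ ⟨t, rfl⟩
    rw [← map_mul, mul_comm, map_mul]

/-- For an odd prime `p` and a finite nonabelian `p`-group `G` with `|G'| = p`,
`ζ(V(𝔽_p G)) = V(𝔽_p ζ(G)) × N`, with `N` elementary abelian. -/
theorem center_V_decomposition (p : ℕ) [Fact p.Prime] (hodd : 2 < p) (G : Type*)
    [Group G] [Fintype G] [DecidableEq G] (hG : IsPGroup p G)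
    (hna : ¬ ∀ a b : G, a * b = b * a) (hG' : Nat.card (commutator G) = p) :
    (Subgroup.center ↥(V p G)).map (V p G).subtype = Vcenter p G ⊔ Nsub p G ∧
    Vcenter p G ⊓ Nsub p G = ⊥ ∧
    (∀ n ∈ Nsub p G, n ^ p = 1) ∧
    (∀ m ∈ Nsub p G, ∀ n ∈ Nsub p G, m * n = n * m) :=
  center_V_decomposition_general p G hG hG'
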